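/- Let k = 4m+3 for a non-negative integer m, let x_i, y_i, z_i ∈ {0,1} for 0 ≤ i ≤ n, and define S_t = Σ_{i=n-t}^n (x_i + z_i - k y_i) 2^i. Suppose (2m+2)·2^{n-t} ≤ S_t < k·2^{n-t}, x_i XOR y_i XOR z_i = 0 for all i with n-t ≤ i ≤ n, and t < n. If (x_{n-t-1}, y_{n-t-1}, z_{n-t-1}) = (1,1,0) or (0,1,1), then 0 ≤ S_{t+1} < k·2^{n-t-1}. -/

import Mathlib

/-- `S_t = Σ_{i=n-t}^n (x_i + z_i - k y_i) 2^i` as an integer. -/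
def Spoly (k n : ℕ) (x y z : ℕ → ℕ) (t : ℕ) : ℤ :=
  ∑ i ∈ Finset.Icc (n - t) n, ((x i : ℤ) + (z i : ℤ) - (k : ℤ) * (y i : ℤ)) * 2 ^ i

/-!
Write `e = n - t - 1`. Since `k` is odd, every digit `x_i + z_i - k y_i` with even `x_i + y_i + z_i`
is even, so `S_t = 4c · 2^e`, and the window `(2m+2) 2^(e+1) ≤ S_t < k 2^(e+1)` pins `c` to
`m + 1 ≤ c ≤ 2m + 1`. The new digit `1 - k = -(4m+2)` then gives `S_{t+1} = (4c - 4m - 2) 2^e`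
with `2 ≤ 4c - 4m - 2 ≤ 4m + 2 < k`.
-/

theorem Spoly_succ {k n t : ℕ} (x y z : ℕ → ℕ) (ht : t < n) :
    Spoly k n x y z (t + 1) =
      ((x (n - t - 1) : ℤ) + z (n - t - 1) - k * y (n - t - 1)) * 2 ^ (n - t - 1) +
        Spoly k n x y z t := by
  have hsplit : Finset.Icc (n - (t + 1)) n = insert (n - t - 1) (Finset.Icc (n - t) n) := by
    rw [← Finset.insert_Icc_add_one_left_eq_Icc (Nat.sub_le n (t + 1)), show n - (t + 1) + 1 = n - t by omega, Nat.sub_sub]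
  rw [Spoly, Spoly, hsplit, Finset.sum_insert (by simp only [Finset.mem_Icc]; omega)]

theorem two_dvd_digit_of_odd {k a b c : ℕ} (hk : Odd k) (habc : (a + b + c) % 2 = 0) :
    (2 : ℤ) ∣ (a : ℤ) + c - k * b := by
  obtain ⟨j, rfl⟩ := hk
  obtain ⟨d, hd⟩ := Nat.dvd_of_mod_eq_zero habc
  exact ⟨d - (j + 1) * b, by push_cast at hd ⊢; linarith⟩

theorem two_pow_dvd_Spoly {k n t : ℕ} (hk : Odd k) (x y z : ℕ → ℕ)
    (hxor : ∀ i, n - t ≤ i → i ≤ n → (x i + y i + z i) % 2 = 0) :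
    (2 : ℤ) ^ (n - t + 1) ∣ Spoly k n x y z t := by
  refine Finset.dvd_sum fun i hi => ?_
  rw [Finset.mem_Icc] at hi
  rw [pow_succ']
  exact mul_dvd_mul (two_dvd_digit_of_odd hk (hxor i hi.1 hi.2)) (pow_dvd_pow 2 hi.1)

theorem next_window_bounds {m a c : ℤ} (ha : 0 < a)
    (h0 : (2 * m + 2) * (2 * a) ≤ 4 * a * c) (h1 : 4 * a * c < (4 * m + 3) * (2 * a)) :
    0 ≤ -(4 * m + 2) * a + 4 * a * c ∧ -(4 * m + 2) * a + 4 * a * c < (4 * m + 3) * a := by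
  have hc0 : m + 1 ≤ c := by nlinarith
  have hc1 : 2 * c ≤ 4 * m + 2 := by
    have : 2 * c < 4 * m + 3 := by nlinarith
    omega
  constructor <;> nlinarith

theorem stmt_9_general (m n t : ℕ) (ht : t < n)
    (x y z : ℕ → ℕ)
    (hS0 : (2 * m + 2 : ℤ) * 2 ^ (n - t) ≤ Spoly (4 * m + 3) n x y z t)
    (hS1 : Spoly (4 * m + 3) n x y z t < (4 * m + 3 : ℤ) * 2 ^ (n - t))
    (hxor : ∀ i, n - t ≤ i → i ≤ n → (x i + y i + z i) % 2 = 0)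
    (hcase : (x (n - t - 1), y (n - t - 1), z (n - t - 1)) = (1, 1, 0) ∨
             (x (n - t - 1), y (n - t - 1), z (n - t - 1)) = (0, 1, 1)) :
    0 ≤ Spoly (4 * m + 3) n x y z (t + 1) ∧
      Spoly (4 * m + 3) n x y z (t + 1) < (4 * m + 3 : ℤ) * 2 ^ (n - t - 1) := by
  obtain ⟨c, hc⟩ := two_pow_dvd_Spoly (k := 4 * m + 3) ⟨2 * m + 1, by ring⟩ x y z hxor
  have hdigit : ((x (n - t - 1) : ℤ) + z (n - t - 1) - ((4 * m + 3 : ℕ) : ℤ) * y (n - t - 1))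
      = -(4 * m + 2) := by
    rcases hcase with h | h <;> simp only [Prod.mk.injEq] at h <;>
      rw [h.1, h.2.1, h.2.2] <;> push_cast <;> ring
  have h2 : (2 : ℤ) ^ (n - t) = 2 * 2 ^ (n - t - 1) := by
    rw [← pow_succ', Nat.sub_add_cancel (by omega)]
  have h4 : (2 : ℤ) ^ (n - t + 1) = 4 * 2 ^ (n - t - 1) := by rw [pow_succ, h2]; ring
  rw [hc, h2, h4] at hS0 hS1
  rw [Spoly_succ x y z ht, hdigit, hc, h4]
  exact next_window_bounds (by positivity) hS0 hS1

theorem stmt_9 (m n t : ℕ) (ht : t < n)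
    (x y z : ℕ → ℕ)
    (hx : ∀ i ≤ n, x i ≤ 1) (hy : ∀ i ≤ n, y i ≤ 1) (hz : ∀ i ≤ n, z i ≤ 1)
    (hS0 : (2 * m + 2 : ℤ) * 2 ^ (n - t) ≤ Spoly (4 * m + 3) n x y z t)
    (hS1 : Spoly (4 * m + 3) n x y z t < (4 * m + 3 : ℤ) * 2 ^ (n - t))
    (hxor : ∀ i, n - t ≤ i → i ≤ n → (x i + y i + z i) % 2 = 0)
    (hcase : (x (n - t - 1), y (n - t - 1), z (n - t - 1)) = (1, 1, 0) ∨
             (x (n - t - 1), y (n - t - 1), z (n - t - 1)) = (0, 1, 1)) :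
    0 ≤ Spoly (4 * m + 3) n x y z (t + 1) ∧
      Spoly (4 * m + 3) n x y z (t + 1) < (4 * m + 3 : ℤ) * 2 ^ (n - t - 1) :=
  stmt_9_general m n t ht x y z hS0 hS1 hxor hcase
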